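/- Let ℏ > 0 and suppose that 8/π ≠ nℏ for every integer n and 4/π ≠ nℏ for every integer n. Then there exists ε > 0 such that for every e with 2 − ε < e < 2 the value I₀(e) is not an integer multiple of ℏ, and for every e with 2 < e < 2 + ε the value I±(e) is not an integer multiple of ℏ. (Equivalently, the set H⁻¹((2−ε, 2+ε)) contains no Bohr–Sommerfeld tori.) -/

import Mathlib

open Real Filter Topology Set

/-!
Both actions are multiples of `J(e) = ∫_{-π}^{π} √(2(e - 1 + cos α)) dα`: for `e < 2` the
radicand is nonpositive outside `[-α⁺(e), α⁺(e)]`, so `I₀ = J / π`, while `I± = J / (2π)`.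
`J` is continuous, and on the separatrix `√(2(1 + cos α)) = 2 cos (α / 2)` gives `J(2) = 8`.
As the integer multiples of `ℏ` form a closed set, `8/π` and `4/π` have neighbourhoods avoiding
them.
-/

theorem isClosed_range_intCast_mul (c : ℝ) : IsClosed (range fun n : ℤ ↦ (n : ℝ) * c) := by
  rcases eq_or_ne c 0 with rfl | hc
  · simp
  · have : range (fun n : ℤ ↦ (n : ℝ) * c) = (fun x ↦ x * c) '' range ((↑) : ℤ → ℝ) := by
      rw [← range_comp]; rfl
    rw [this]
    exact (Homeomorph.mulRight₀ c hc).isClosedMap _ isClosed_range_intCast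

noncomputable def momentumIntegral (e : ℝ) : ℝ := ∫ α in (-π)..π, √(2 * (e - 1 + cos α))

theorem continuous_momentumIntegral : Continuous momentumIntegral :=
  intervalIntegral.continuous_parametric_intervalIntegral_of_continuous'
    (by fun_prop) _ _

theorem sqrt_two_mul_one_add_cos {α : ℝ} (h₁ : -π ≤ α) (h₂ : α ≤ π) :
    √(2 * (1 + cos α)) = 2 * cos (α / 2) := by
  rw [cos_half h₁ h₂, show (2 : ℝ) * (1 + cos α) = 2 ^ 2 * ((1 + cos α) / 2) by ring,
    sqrt_mul (by positivity), sqrt_sq zero_le_two]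

theorem momentumIntegral_two : momentumIntegral 2 = 8 := by
  have : ∫ α in (-π)..π, √(2 * (2 - 1 + cos α)) = ∫ α in (-π)..π, 2 * cos (α / 2) := by
    refine intervalIntegral.integral_congr fun α hα ↦ ?_
    rw [uIcc_of_le (by linarith [pi_pos])] at hα
    rw [← sqrt_two_mul_one_add_cos hα.1 hα.2]
    norm_num
  rw [momentumIntegral, this, intervalIntegral.integral_const_mul,
    intervalIntegral.integral_comp_div _ two_ne_zero, integral_cos]
  simp [neg_div]
  norm_num

theorem integral_arccos_eq_momentumIntegral {e : ℝ} (he : e ≤ 2) :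
    ∫ α in (-arccos (1 - e))..arccos (1 - e), √(2 * (e - 1 + cos α)) = momentumIntegral e := by
  set a := arccos (1 - e)
  have ha : 0 ≤ a := arccos_nonneg _
  have haπ : a ≤ π := arccos_le_pi _
  have hvanish : ∀ α, a ≤ |α| → |α| ≤ π → √(2 * (e - 1 + cos α)) = 0 := by
    intro α h₁ h₂
    refine sqrt_eq_zero_of_nonpos ?_
    rcases le_or_gt e 0 with he0 | he0
    · nlinarith [cos_le_one α]
    · have : cos α ≤ cos a := by
        rw [← cos_abs α]; exact cos_le_cos_of_nonneg_of_le_pi ha h₂ h₁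
      rw [cos_arccos (by linarith) (by linarith)] at this
      linarith
  have hcont : Continuous fun α ↦ √(2 * (e - 1 + cos α)) := by fun_prop
  have hleft : ∫ α in (-π)..(-a), √(2 * (e - 1 + cos α)) = 0 := by
    rw [intervalIntegral.integral_congr (g := fun _ ↦ 0) fun α hα ↦ ?_,
      intervalIntegral.integral_zero]
    rw [uIcc_of_le (by linarith)] at hα
    exact hvanish α (le_abs.2 (.inr (by linarith [hα.2])))
      (abs_le.2 ⟨hα.1, by linarith [hα.2]⟩)
  have hright : ∫ α in a..π, √(2 * (e - 1 + cos α)) = 0 := by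
    rw [intervalIntegral.integral_congr (g := fun _ ↦ 0) fun α hα ↦ ?_,
      intervalIntegral.integral_zero]
    rw [uIcc_of_le haπ] at hα
    exact hvanish α (le_abs.2 (.inl hα.1)) (abs_le.2 ⟨by linarith [hα.1], hα.2⟩)
  rw [momentumIntegral, ← intervalIntegral.integral_add_adjacent_intervals
      (hcont.intervalIntegrable _ (-a)) (hcont.intervalIntegrable _ π),
    ← intervalIntegral.integral_add_adjacent_intervals
      (hcont.intervalIntegrable (-a) a) (hcont.intervalIntegrable a π), hleft, hright]
  ring

theorem stmt_10_general (hbar : ℝ)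
    (h8 : ∀ n : ℤ, (8 / Real.pi : ℝ) ≠ n * hbar)
    (h4 : ∀ n : ℤ, (4 / Real.pi : ℝ) ≠ n * hbar) :
    ∃ ε > (0 : ℝ),
      (∀ e : ℝ, 2 - ε < e → e < 2 → ∀ n : ℤ,
        (1 / Real.pi) *
          ∫ α in (-Real.arccos (1 - e))..(Real.arccos (1 - e)),
            Real.sqrt (2 * (e - 1 + Real.cos α)) ≠ n * hbar) ∧
      (∀ e : ℝ, 2 < e → e < 2 + ε → ∀ n : ℤ,
        (1 / (2 * Real.pi)) *
          ∫ α in (-Real.pi)..Real.pi, Real.sqrt (2 * (e - 1 + Real.cos α)) ≠ n * hbar) := by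
  set U := (range fun n : ℤ ↦ (n : ℝ) * hbar)ᶜ
  have hU : IsOpen U := (isClosed_range_intCast_mul hbar).isOpen_compl
  have hJ : Tendsto momentumIntegral (𝓝 2) (𝓝 8) :=
    momentumIntegral_two ▸ continuous_momentumIntegral.tendsto 2
  have h8U : ∀ᶠ e in 𝓝 2, 1 / π * momentumIntegral e ∈ U :=
    (hJ.const_mul _).eventually <|
      hU.mem_nhds fun ⟨n, hn⟩ ↦ h8 n (by linear_combination -hn)
  have h4U : ∀ᶠ e in 𝓝 2, 1 / (2 * π) * momentumIntegral e ∈ U :=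
    (hJ.const_mul _).eventually <|
      hU.mem_nhds fun ⟨n, hn⟩ ↦ h4 n (by linear_combination -hn)
  obtain ⟨ε, hε, hεU⟩ := Metric.eventually_nhds_iff.1 (h8U.and h4U)
  have hdist : ∀ e, 2 - ε < e → e < 2 + ε → dist e 2 < ε := fun e h₁ h₂ ↦
    abs_sub_lt_iff.2 ⟨by linarith, by linarith⟩
  refine ⟨ε, hε, fun e h₁ h₂ n hn ↦ ?_, fun e h₁ h₂ n hn ↦ ?_⟩
  · rw [integral_arccos_eq_momentumIntegral h₂.le] at hn
    exact (hεU (hdist e h₁ (by linarith))).1 ⟨n, hn.symm⟩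
  · exact (hεU (hdist e (by linarith) h₂)).2 ⟨n, hn.symm⟩

/-- If neither `8/π` nor `4/π` is an integer multiple of `ℏ`, then there is `ε > 0` such that
for `2 − ε < e < 2` the action `I₀(e)` is not an integer multiple of `ℏ`, and for
`2 < e < 2 + ε` the action `I±(e)` is not an integer multiple of `ℏ`; i.e. the band
`H⁻¹((2−ε, 2+ε))` contains no Bohr–Sommerfeld tori. -/
theorem stmt_10 (hbar : ℝ) (hpos : 0 < hbar)
    (h8 : ∀ n : ℤ, (8 / Real.pi : ℝ) ≠ n * hbar)
    (h4 : ∀ n : ℤ, (4 / Real.pi : ℝ) ≠ n * hbar) :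
    ∃ ε > (0 : ℝ),
      (∀ e : ℝ, 2 - ε < e → e < 2 → ∀ n : ℤ,
        (1 / Real.pi) *
          ∫ α in (-Real.arccos (1 - e))..(Real.arccos (1 - e)),
            Real.sqrt (2 * (e - 1 + Real.cos α)) ≠ n * hbar) ∧
      (∀ e : ℝ, 2 < e → e < 2 + ε → ∀ n : ℤ,
        (1 / (2 * Real.pi)) *
          ∫ α in (-Real.pi)..Real.pi, Real.sqrt (2 * (e - 1 + Real.cos α)) ≠ n * hbar) :=
  stmt_10_general hbar h8 h4
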